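/- arXiv:2604.02146 — 3 statements merged into one kernel-verified Lean document; each statement's English description precedes it below -/
import Mathlib

section
/- Every invertible n×n matrix M over a field K admits a Bruhat decomposition: there exist upper triangular n×n matrices U₁ and U₂ over K and a permutation matrix P such that M = U₁ · P · U₂. -/
/-- An `n × n` matrix is upper triangular if all entries below the diagonal vanish. -/
def IsUpperTriangular {n : ℕ} {K : Type*} [Field K]
    (U : Matrix (Fin n) (Fin n) K) : Prop :=
  ∀ i j : Fin n, j < i → U i j = 0

/-- The permutation matrix associated to a permutation `σ` of `{1,…,n}`:
its `(i,j)` entry is `1` iff `σ i = j`. -/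
def permMatrix {n : ℕ} (K : Type*) [Field K] (σ : Equiv.Perm (Fin n)) :
    Matrix (Fin n) (Fin n) K :=
  Matrix.of fun i j => if σ i = j then 1 else 0

/-!
Induction on `n`. Let `c = M i 0` be the lowest nonzero entry of the first column of `M`.
Adding multiples of row `i` to the rows above it and multiples of column `0` to the columns
after it are both upper triangular operations, and they turn `M` into a matrix whose row `i`
and column `0` vanish except for `c`, with the Schur complement `S` of `c` in the remaining
positions. As `det M = ± c * det S`, the matrix `S` is invertible, and bordering a Bruhat
decomposition `U₁ P U₂` of `S` by the pivot `(i, 0)` gives one of `M`.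
-/

lemma exists_last_ne_zero {ι R : Type*} [LinearOrder ι] [Fintype ι] [Zero R] {v : ι → R}
    (hv : v ≠ 0) : ∃ i, v i ≠ 0 ∧ ∀ a, i < a → v a = 0 := by
  classical
  obtain ⟨i, hi, hmax⟩ := (Finset.univ.filter (v · ≠ 0)).exists_max_image id <| by
    simpa [Finset.filter_nonempty_iff, funext_iff] using hv
  refine ⟨i, (Finset.mem_filter.1 hi).2, fun a ha => ?_⟩
  by_contra h
  exact (hmax a (by simpa using h)).not_gt ha

namespace Matrix

variable {n : ℕ} {R : Type*}

/-- `A` with a new row inserted at position `i` and a new column at position `j`, both zero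
except for the entry `c` where they cross. -/
def border [Zero R] (i j : Fin (n + 1)) (c : R) (A : Matrix (Fin n) (Fin n) R) :
    Matrix (Fin (n + 1)) (Fin (n + 1)) R :=
  (fromBlocks A 0 0 (of fun _ _ => c : Matrix Unit Unit R)).submatrix
    ((finSuccEquiv' i).trans (Equiv.optionEquivSumPUnit _))
    ((finSuccEquiv' j).trans (Equiv.optionEquivSumPUnit _))

section Entries

variable [Zero R] (i j : Fin (n + 1)) (c : R) (A : Matrix (Fin n) (Fin n) R)

@[simp] lemma border_apply_self : border i j c A i j = c := by
  simp [border, finSuccEquiv'_at]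

@[simp] lemma border_apply_succAbove_right (b : Fin n) :
    border i j c A i (j.succAbove b) = 0 := by
  simp [border, finSuccEquiv'_at]

@[simp] lemma border_apply_succAbove_left (a : Fin n) :
    border i j c A (i.succAbove a) j = 0 := by
  simp [border, finSuccEquiv'_at]

@[simp] lemma border_apply_succAbove_succAbove (a b : Fin n) :
    border i j c A (i.succAbove a) (j.succAbove b) = A a b := by
  simp [border]

@[simp] lemma submatrix_succAbove_border :
    (border i j c A).submatrix i.succAbove j.succAbove = A := by
  ext; simp

end Entries

lemma border_mul_border [NonUnitalNonAssocSemiring R] (i j k : Fin (n + 1)) (c d : R)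
    (A B : Matrix (Fin n) (Fin n) R) :
    border i j c A * border j k d B = border i k (c * d) (A * B) := by
  rw [border, border, submatrix_mul_equiv, fromBlocks_multiply]
  simp only [Matrix.mul_zero, Matrix.zero_mul, add_zero, zero_add]
  congr 2
  ext
  simp [mul_apply]

lemma det_border [CommRing R] (i j : Fin (n + 1)) (c : R) (A : Matrix (Fin n) (Fin n) R) :
    (border i j c A).det = (-1) ^ (i + j : ℕ) * c * A.det := by
  rw [det_succ_column _ j, Fintype.sum_eq_single i fun a ha => ?_]
  · simp
  · obtain ⟨a, rfl⟩ := Fin.exists_succAbove_eq ha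
    simp

lemma IsUpperTriangular.border [Zero R] {U : Matrix (Fin n) (Fin n) R}
    (hU : U.IsUpperTriangular) (i : Fin (n + 1)) (c : R) :
    (border i i c U).IsUpperTriangular := by
  intro x y hxy
  cases x using Fin.succAboveCases i <;> cases y using Fin.succAboveCases i
  · exact absurd hxy (lt_irrefl _)
  · simp
  · simp
  · simpa using hU (Fin.succAbove_lt_succAbove_iff.mp hxy)

lemma isUpperTriangular_one_updateCol [Zero R] [One R] {m : ℕ} {i : Fin m} {w : Fin m → R}
    (hw : ∀ a, i < a → w a = 0) :
    (updateCol (1 : Matrix (Fin m) (Fin m) R) i w).IsUpperTriangular := by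
  intro a b hba
  rw [updateCol_apply]
  split_ifs with h
  · exact hw a (h ▸ hba)
  · exact one_apply_ne hba.ne'

lemma isUpperTriangular_one_updateRow [Zero R] [One R] {m : ℕ} {j : Fin m} {r : Fin m → R}
    (hr : ∀ b, b < j → r b = 0) :
    (updateRow (1 : Matrix (Fin m) (Fin m) R) j r).IsUpperTriangular := by
  intro a b hba
  rw [updateRow_apply]
  split_ifs with h
  · exact hr b (h ▸ hba)
  · exact one_apply_ne hba.ne'

section Field

variable {K : Type*} [Field K]

def schurComplement (M : Matrix (Fin (n + 1)) (Fin (n + 1)) K) (i j : Fin (n + 1)) :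
    Matrix (Fin n) (Fin n) K :=
  of fun a b => M (i.succAbove a) (j.succAbove b) - M (i.succAbove a) j * M i (j.succAbove b) / M i j

theorem eq_updateCol_mul_border_mul_updateRow (M : Matrix (Fin (n + 1)) (Fin (n + 1)) K)
    (i j : Fin (n + 1)) (hc : M i j ≠ 0) :
    M = updateCol 1 i (fun a => M a j / M i j) * border i j (M i j) (M.schurComplement i j) *
      updateRow 1 j (fun b => M i b / M i j) := by
  ext x y
  rw [mul_apply, Fin.sum_univ_succAbove _ j]
  simp only [mul_apply, Fin.sum_univ_succAbove _ i, updateCol_apply, updateRow_apply]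
  cases x using Fin.succAboveCases i <;> cases y using Fin.succAboveCases j <;>
    simp [schurComplement, one_apply, hc, mul_div_assoc']

lemma exists_border_permMatrix (i j : Fin (n + 1)) (σ : Equiv.Perm (Fin n)) :
    ∃ τ : Equiv.Perm (Fin (n + 1)), border i j 1 (permMatrix K σ) = permMatrix K τ := by
  refine ⟨(finSuccEquiv' i).trans ((Equiv.optionCongr σ).trans (finSuccEquiv' j).symm), ?_⟩
  ext x y
  cases x using Fin.succAboveCases i <;> cases y using Fin.succAboveCases j <;>
    simp [permMatrix, finSuccEquiv'_at, finSuccEquiv'_succAbove]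

theorem exists_bruhat_of_det_ne_zero :
    ∀ {n : ℕ} (M : Matrix (Fin n) (Fin n) K), M.det ≠ 0 →
      ∃ (U₁ U₂ : Matrix (Fin n) (Fin n) K) (σ : Equiv.Perm (Fin n)),
        U₁.IsUpperTriangular ∧ U₂.IsUpperTriangular ∧ M = U₁ * permMatrix K σ * U₂
  | 0, M, _ => ⟨1, 1, 1, fun i => i.elim0, fun i => i.elim0, Subsingleton.elim _ _⟩
  | n + 1, M, hM => by
    obtain ⟨i, hc, hbelow⟩ := exists_last_ne_zero (v := fun a => M a 0) fun h =>
      hM (det_eq_zero_of_column_eq_zero 0 (congr_fun h))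
    have hpivot := eq_updateCol_mul_border_mul_updateRow M i 0 hc
    have hS : (M.schurComplement i 0).det ≠ 0 := by
      rw [hpivot, det_mul, det_mul, det_border] at hM
      intro h
      simp [h] at hM
    obtain ⟨U₁, U₂, σ, hU₁, hU₂, hSeq⟩ := exists_bruhat_of_det_ne_zero _ hS
    obtain ⟨τ, hτ⟩ := exists_border_permMatrix (K := K) i 0 σ
    have hborder : border i 0 (M i 0) (M.schurComplement i 0) =
        border i i 1 U₁ * permMatrix K τ * border 0 0 (M i 0) U₂ := by
      rw [hSeq, ← hτ, border_mul_border, border_mul_border, one_mul, one_mul]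
    refine ⟨updateCol 1 i (fun a => M a 0 / M i 0) * border i i 1 U₁,
      border 0 0 (M i 0) U₂ * updateRow 1 0 (fun b => M i b / M i 0), τ,
      (isUpperTriangular_one_updateCol fun a ha => by simp [hbelow a ha]).mul (hU₁.border i 1),
      (hU₂.border 0 _).mul (isUpperTriangular_one_updateRow fun b hb => absurd hb b.not_lt_zero),
      ?_⟩
    calc M = _ := hpivot
      _ = _ := by rw [hborder]; simp only [Matrix.mul_assoc]

end Field

end Matrix

lemma isUpperTriangular_iff_matrix_isUpperTriangular {n : ℕ} {K : Type*} [Field K]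
    {U : Matrix (Fin n) (Fin n) K} : IsUpperTriangular U ↔ U.IsUpperTriangular :=
  ⟨fun h _ _ => h _ _, fun h _ _ => @h _ _⟩

/-- Every invertible `n × n` matrix over a field admits a Bruhat decomposition
`M = U₁ * P * U₂` with `U₁, U₂` upper triangular and `P` a permutation matrix. -/
theorem bruhat_decomposition_exists {n : ℕ} {K : Type*} [Field K]
    (M : Matrix (Fin n) (Fin n) K) (hM : IsUnit M) :
    ∃ (U₁ U₂ : Matrix (Fin n) (Fin n) K) (σ : Equiv.Perm (Fin n)),
      IsUpperTriangular U₁ ∧ IsUpperTriangular U₂ ∧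
      M = U₁ * permMatrix K σ * U₂ := by
  obtain ⟨U₁, U₂, σ, hU₁, hU₂, h⟩ :=
    Matrix.exists_bruhat_of_det_ne_zero M ((Matrix.isUnit_iff_isUnit_det M).1 hM).ne_zero
  exact ⟨U₁, U₂, σ, isUpperTriangular_iff_matrix_isUpperTriangular.2 hU₁,
    isUpperTriangular_iff_matrix_isUpperTriangular.2 hU₂, h⟩
end

section
/- The permutation matrix in a Bruhat decomposition is unique: if M is an invertible n×n matrix over a field K and M = U₁ P U₂ = V₁ Q V₂, where U₁, U₂, V₁, V₂ are upper triangular matrices and P, Q are permutation matrices, then P = Q. -/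
lemma IsUpperTriangular.blockTriangular {n : ℕ} {K : Type*} [Field K]
    {U : Matrix (Fin n) (Fin n) K} (h : IsUpperTriangular U) :
    U.BlockTriangular id := fun i j hij => h i j hij

lemma permMatrix_eq {n : ℕ} (K : Type*) [Field K] (σ : Equiv.Perm (Fin n)) :
    permMatrix K σ = σ.permMatrix K := by
  ext i j
  simp [permMatrix, PEquiv.toMatrix, Equiv.toPEquiv, Option.mem_def, eq_comm]

/-- The permutation matrix in a Bruhat decomposition of an invertible matrix is unique:
if `M = U₁ P U₂ = V₁ Q V₂` with `U₁, U₂, V₁, V₂` upper triangular and `P, Q`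
permutation matrices, then `P = Q`. -/
theorem bruhat_perm_unique {n : ℕ} {K : Type*} [Field K]
    (M U₁ U₂ V₁ V₂ : Matrix (Fin n) (Fin n) K) (σ τ : Equiv.Perm (Fin n))
    (hM : IsUnit M)
    (hU₁ : IsUpperTriangular U₁) (hU₂ : IsUpperTriangular U₂)
    (hV₁ : IsUpperTriangular V₁) (hV₂ : IsUpperTriangular V₂)
    (h₁ : M = U₁ * permMatrix K σ * U₂)
    (h₂ : M = V₁ * permMatrix K τ * V₂) :
    permMatrix K σ = permMatrix K τ := by
  have hMdet : M.det ≠ 0 := ((Matrix.isUnit_iff_isUnit_det M).mp hM).ne_zero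
  have hdet₁ : U₁.det * (permMatrix K σ).det * U₂.det ≠ 0 := by
    rw [← Matrix.det_mul, ← Matrix.det_mul, ← h₁]; exact hMdet
  have hdet₂ : V₁.det * (permMatrix K τ).det * V₂.det ≠ 0 := by
    rw [← Matrix.det_mul, ← Matrix.det_mul, ← h₂]; exact hMdet
  have hU₁d : U₁.det ≠ 0 := fun h => hdet₁ (by simp [h])
  have hU₂d : U₂.det ≠ 0 := fun h => hdet₁ (by simp [h])
  have hV₁d : V₁.det ≠ 0 := fun h => hdet₂ (by simp [h])
  have hV₂d : V₂.det ≠ 0 := fun h => hdet₂ (by simp [h])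
  have hV₁u : IsUnit V₁.det := isUnit_iff_ne_zero.mpr hV₁d
  have hU₂u : IsUnit U₂.det := isUnit_iff_ne_zero.mpr hU₂d
  haveI : Invertible V₁ := V₁.invertibleOfIsUnitDet hV₁u
  haveI : Invertible U₂ := U₂.invertibleOfIsUnitDet hU₂u
  set A := V₁⁻¹ * U₁ with hA
  set C := V₂ * U₂⁻¹ with hC
  have key : A * permMatrix K σ = permMatrix K τ * C := by
    have h3 : U₁ * permMatrix K σ * U₂ = V₁ * permMatrix K τ * V₂ := by
      rw [← h₁, ← h₂]
    calc A * permMatrix K σ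
        = V₁⁻¹ * (U₁ * permMatrix K σ * U₂) * U₂⁻¹ := by
          rw [← Matrix.mul_assoc V₁⁻¹ (U₁ * permMatrix K σ) U₂,
            Matrix.mul_nonsing_inv_cancel_right _ _ hU₂u, hA,
            Matrix.mul_assoc]
      _ = V₁⁻¹ * (V₁ * permMatrix K τ * V₂) * U₂⁻¹ := by rw [h3]
      _ = permMatrix K τ * C := by
          rw [Matrix.mul_assoc V₁ (permMatrix K τ) V₂,
            Matrix.nonsing_inv_mul_cancel_left _ _ hV₁u, hC,
            Matrix.mul_assoc]
  -- A and C upper triangular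
  have hAt : A.BlockTriangular id :=
    (Matrix.blockTriangular_inv_of_blockTriangular hV₁.blockTriangular).mul hU₁.blockTriangular
  have hCt : C.BlockTriangular id :=
    hV₂.blockTriangular.mul (Matrix.blockTriangular_inv_of_blockTriangular hU₂.blockTriangular)
  have hAd : A.det ≠ 0 := by
    rw [hA, Matrix.det_mul, Matrix.det_nonsing_inv, Ring.inverse_eq_inv]
    exact mul_ne_zero (inv_ne_zero hV₁d) hU₁d
  have hAdiag : ∀ i, A i i ≠ 0 := by
    intro i h
    apply hAd
    rw [Matrix.det_of_upperTriangular hAt]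
    exact Finset.prod_eq_zero (Finset.mem_univ i) h
  -- entrywise identity
  have entry : ∀ i j, A i (σ.symm j) = C (τ i) j := by
    intro i j
    have h := congrFun (congrFun key i) j
    have hl : (A * permMatrix K σ) i j = A i (σ.symm j) := by
      rw [Matrix.mul_apply, Finset.sum_eq_single (σ.symm j)]
      · simp [permMatrix]
      · intro k _ hk
        have : σ k ≠ j := fun hkj => hk (by rw [← hkj]; simp)
        simp [permMatrix, this]
      · intro h; exact absurd (Finset.mem_univ _) h
    have hr : (permMatrix K τ * C) i j = C (τ i) j := by
      rw [Matrix.mul_apply, Finset.sum_eq_single (τ i)]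
      · simp [permMatrix]
      · intro k _ hk
        simp [permMatrix, Ne.symm hk]
      · intro h; exact absurd (Finset.mem_univ _) h
    rw [← hl, ← hr, h]
  -- τ i ≤ σ i for all i
  have hle : ∀ i, (τ i : ℕ) ≤ (σ i : ℕ) := by
    intro i
    by_contra h
    push_neg at h
    have h2 : C (τ i) (σ i) = 0 := hCt (show id (σ i) < id (τ i) from h)
    have h3 := entry i (σ i)
    rw [Equiv.symm_apply_apply] at h3
    exact hAdiag i (h3.trans h2)
  have hsum : ∑ i, (τ i : ℕ) = ∑ i, (σ i : ℕ) := by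
    rw [Equiv.sum_comp τ (fun i : Fin n => (i : ℕ)),
      Equiv.sum_comp σ (fun i : Fin n => (i : ℕ))]
  have heq : ∀ i, τ i = σ i := fun i =>
    Fin.ext ((Finset.sum_eq_sum_iff_of_le (fun i _ => hle i)).mp hsum i
      (Finset.mem_univ i))
  ext i j
  simp [permMatrix, heq i]
end

section
/- Let M be an invertible lower triangular n×n matrix over a field K (i.e. M_{ij} = 0 whenever i < j). Suppose M = V₁ R V₂ is a Bruhat decomposition of M and −Mᵀ M⁻¹ = U₁ P U₂ is a Bruhat decomposition of the matrix −Mᵀ M⁻¹. Then R = P⁻¹ = Pᵀ. (This is the matrix-theoretic content of the fact that, for an algebra of finite global dimension with lower triangular Cartan matrix ω, the Coxeter permutation computed from the Coxeter matrix C = −ωᵀω⁻¹ coincides with the row-permutation of the permutation matrix in a Bruhat decomposition of ω.) -/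
/-- An `n × n` matrix is lower triangular if all entries above the diagonal vanish. -/
def IsLowerTriangular {n : ℕ} {K : Type*} [Field K]
    (L : Matrix (Fin n) (Fin n) K) : Prop :=
  ∀ i j : Fin n, i < j → L i j = 0

/-!
From `M = V₁ P_ρ V₂` we get `M⁻¹ = V₂⁻¹ P_ρ⁻¹ V₁⁻¹`, and since `Mᵀ` is upper triangular,
`-Mᵀ M⁻¹ = (-Mᵀ V₂⁻¹) P_ρ⁻¹ V₁⁻¹` is again a Bruhat decomposition; uniqueness of the Bruhat
permutation then gives `σ = ρ⁻¹`.

Uniqueness: `U₁ P_σ U₂ = U₁' P_τ U₂'` rearranges to `A P_σ = P_τ B` with `A, B` upper triangular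
and `A` invertible. The `(i, σ i)` entry of the left side is the diagonal entry `A i i ≠ 0`, that of
the right side is `B (τ i) (σ i)`, so `τ i ≤ σ i` for every `i`, and a permutation of `Fin n`
dominated pointwise by another one equals it.
-/

open Equiv

section

variable {n : ℕ} {K : Type*} [Field K]

section Triangular

variable {A B : Matrix (Fin n) (Fin n) K}

theorem IsUpperTriangular.mul (hA : IsUpperTriangular A) (hB : IsUpperTriangular B) :
    IsUpperTriangular (A * B) :=
  Matrix.BlockTriangular.mul hA hB

theorem IsUpperTriangular.neg (hA : IsUpperTriangular A) : IsUpperTriangular (-A) :=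
  Matrix.BlockTriangular.neg hA

theorem IsUpperTriangular.inv (hA : IsUpperTriangular A) (hAu : IsUnit A) :
    IsUpperTriangular A⁻¹ :=
  have := hAu.invertible
  Matrix.blockTriangular_inv_of_blockTriangular hA

theorem IsLowerTriangular.isUpperTriangular_transpose (hA : IsLowerTriangular A) :
    IsUpperTriangular A.transpose :=
  fun i j hij => hA j i hij

theorem IsUpperTriangular.diag_ne_zero (hA : IsUpperTriangular A) (hAu : IsUnit A) (i : Fin n) :
    A i i ≠ 0 := by
  have hdet : IsUnit (∏ i, A i i) :=
    Matrix.det_of_isUpperTriangular hA ▸ (Matrix.isUnit_iff_isUnit_det A).1 hAu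
  exact Finset.prod_ne_zero_iff.1 hdet.ne_zero i (Finset.mem_univ i)

end Triangular

section Permutation

theorem permMatrix_eq_perm_permMatrix (σ : Perm (Fin n)) : permMatrix K σ = σ.permMatrix K := by
  ext i j
  simp [permMatrix, PEquiv.toMatrix_apply]

theorem permMatrix_inv (σ : Perm (Fin n)) : (permMatrix K σ)⁻¹ = permMatrix K σ⁻¹ := by
  simp only [permMatrix_eq_perm_permMatrix]
  refine Matrix.inv_eq_left_inv ?_
  rw [← Matrix.permMatrix_mul, mul_inv_cancel, Matrix.permMatrix_one]

theorem permMatrix_transpose (σ : Perm (Fin n)) :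
    (permMatrix K σ).transpose = permMatrix K σ⁻¹ := by
  simp only [permMatrix_eq_perm_permMatrix, Matrix.transpose_permMatrix]

theorem mul_permMatrix_apply (A : Matrix (Fin n) (Fin n) K) (σ : Perm (Fin n)) (i j : Fin n) :
    (A * permMatrix K σ) i j = A i (σ.symm j) := by
  rw [permMatrix_eq_perm_permMatrix, PEquiv.mul_toMatrix_toPEquiv, Matrix.submatrix_apply, id]

theorem permMatrix_mul_apply (σ : Perm (Fin n)) (A : Matrix (Fin n) (Fin n) K) (i j : Fin n) :
    (permMatrix K σ * A) i j = A (σ i) j := by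
  rw [permMatrix_eq_perm_permMatrix, PEquiv.toMatrix_toPEquiv_mul, Matrix.submatrix_apply, id]

theorem Equiv.Perm.eq_of_forall_le {σ τ : Perm (Fin n)} (h : ∀ i, σ i ≤ τ i) : σ = τ := by
  have hsum : ∑ i, (σ i : ℕ) = ∑ i, (τ i : ℕ) := by
    rw [Equiv.sum_comp σ (fun i : Fin n => (i : ℕ)), Equiv.sum_comp τ (fun i : Fin n => (i : ℕ))]
  have heq := (Finset.sum_eq_sum_iff_of_le fun i _ => Fin.le_iff_val_le_val.1 (h i)).1 hsum
  exact Equiv.ext fun i => Fin.ext (heq i (Finset.mem_univ i))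

end Permutation

section Bruhat

variable {A B : Matrix (Fin n) (Fin n) K} {σ τ : Perm (Fin n)}

theorem eq_of_mul_permMatrix_eq_permMatrix_mul (hA : IsUpperTriangular A) (hAu : IsUnit A)
    (hB : IsUpperTriangular B) (h : A * permMatrix K σ = permMatrix K τ * B) : σ = τ := by
  refine (Equiv.Perm.eq_of_forall_le fun i => ?_).symm
  have hentry : A i i = B (τ i) (σ i) := by
    simpa only [mul_permMatrix_apply, permMatrix_mul_apply, Equiv.symm_apply_apply] using
      congr_fun₂ h i (σ i)
  exact not_lt.1 fun hlt => hA.diag_ne_zero hAu i (hentry ▸ hB _ _ hlt)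

theorem perm_eq_of_bruhat {M U₁ U₂ U₁' U₂' : Matrix (Fin n) (Fin n) K}
    (hU₁ : IsUpperTriangular U₁) (hU₂ : IsUpperTriangular U₂)
    (hU₁' : IsUpperTriangular U₁') (hU₂' : IsUpperTriangular U₂') (hM : IsUnit M)
    (h : M = U₁ * permMatrix K σ * U₂) (h' : M = U₁' * permMatrix K τ * U₂') : σ = τ := by
  have hU₁u : IsUnit U₁ := isUnit_of_mul_isUnit_left (isUnit_of_mul_isUnit_left (h ▸ hM))
  have hU₂u : IsUnit U₂ := isUnit_of_mul_isUnit_right (h ▸ hM)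
  have hU₁'u : IsUnit U₁' := isUnit_of_mul_isUnit_left (isUnit_of_mul_isUnit_left (h' ▸ hM))
  have := hU₂u.invertible
  have := hU₁'u.invertible
  refine eq_of_mul_permMatrix_eq_permMatrix_mul ((hU₁'.inv hU₁'u).mul hU₁)
    ((Matrix.isUnit_nonsing_inv_iff.2 hU₁'u).mul hU₁u) (hU₂'.mul (hU₂.inv hU₂u)) ?_
  calc U₁'⁻¹ * U₁ * permMatrix K σ = U₁'⁻¹ * (U₁ * permMatrix K σ * U₂) * U₂⁻¹ := by
        simp only [Matrix.mul_assoc, Matrix.mul_inv_of_invertible, Matrix.mul_one]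
    _ = permMatrix K τ * (U₂' * U₂⁻¹) := by
        rw [← h, h']
        simp only [Matrix.mul_assoc, Matrix.inv_mul_cancel_left_of_invertible]

end Bruhat

end

/-- Let `M` be an invertible lower triangular matrix over a field `K`, with a Bruhat
decomposition `M = V₁ R V₂`, and let `-Mᵀ M⁻¹ = U₁ P U₂` be a Bruhat decomposition of
`-Mᵀ M⁻¹`.  Then `R = P⁻¹ = Pᵀ`. -/
theorem bruhat_perm_of_lowerTriangular_vs_coxeter {n : ℕ} {K : Type*} [Field K]
    (M V₁ V₂ U₁ U₂ : Matrix (Fin n) (Fin n) K) (ρ σ : Equiv.Perm (Fin n))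
    (hM : IsUnit M) (hMlow : IsLowerTriangular M)
    (hV₁ : IsUpperTriangular V₁) (hV₂ : IsUpperTriangular V₂)
    (hU₁ : IsUpperTriangular U₁) (hU₂ : IsUpperTriangular U₂)
    (hBruhatM : M = V₁ * permMatrix K ρ * V₂)
    (hBruhatC : -(M.transpose * M⁻¹) = U₁ * permMatrix K σ * U₂) :
    permMatrix K ρ = (permMatrix K σ)⁻¹ ∧
    permMatrix K ρ = (permMatrix K σ).transpose := by
  have hV₁u : IsUnit V₁ := isUnit_of_mul_isUnit_left (isUnit_of_mul_isUnit_left (hBruhatM ▸ hM))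
  have hV₂u : IsUnit V₂ := isUnit_of_mul_isUnit_right (hBruhatM ▸ hM)
  have hCu : IsUnit (-(M.transpose * M⁻¹)) :=
    (((Matrix.isUnit_transpose M).2 hM).mul (Matrix.isUnit_nonsing_inv_iff.2 hM)).neg
  have hMinv : M⁻¹ = V₂⁻¹ * permMatrix K ρ⁻¹ * V₁⁻¹ := by
    rw [hBruhatM, Matrix.mul_inv_rev, Matrix.mul_inv_rev, permMatrix_inv, Matrix.mul_assoc]
  have hBruhatC' : -(M.transpose * M⁻¹) = -(M.transpose * V₂⁻¹) * permMatrix K ρ⁻¹ * V₁⁻¹ := by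
    rw [hMinv]
    noncomm_ring
  have hσ : σ = ρ⁻¹ :=
    perm_eq_of_bruhat hU₁ hU₂ (hMlow.isUpperTriangular_transpose.mul (hV₂.inv hV₂u)).neg
      (hV₁.inv hV₁u) hCu hBruhatC hBruhatC'
  rw [permMatrix_inv, permMatrix_transpose, hσ, inv_inv]
  exact ⟨rfl, rfl⟩
end
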